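/- Let T ∈ B(ℓ²(ℤ)) be a bounded operator such that T p_k = U p_k for every k ∈ ℕ and T v = U v for every v in the one-dimensional subspace spanned by e_{−1}. Then T = U. -/

import Mathlib

/-!
Both `S₂` and `U S₂` map basis vectors to basis vectors, along the injections `n ↦ 2n` and
`σ n = 2n + 1`. Hence `p_k` fixes `e_m` whenever `m = σᵏ (2r)`, and every integer except the
fixed point `-1` of `σ` has this form (peel off the trailing odd steps). So `T` and `U` agree on
every basis vector, and therefore everywhere.
-/

noncomputable section

/-- `ℓ²(ℤ)` with complex coefficients. -/
abbrev H : Type := lp (fun _ : ℤ => ℂ) 2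

/-- The standard orthonormal basis vectors `e n` of `ℓ²(ℤ)`. -/
def e (n : ℤ) : H := lp.single 2 n 1

open ContinuousLinearMap

theorem e_apply (n m : ℤ) : e n m = if m = n then 1 else 0 := by
  simp [e, lp.single_apply, Pi.single_apply]

theorem inner_e_left (n : ℤ) (f : H) : inner ℂ (e n) f = f n := by
  simp [e, lp.inner_single_left]

theorem ext_e {A B : H →L[ℂ] H} (h : ∀ n, A (e n) = B (e n)) : A = B :=
  lp.ext_continuousLinearMap ENNReal.ofNat_ne_top fun n => ext_ring (h n)

section BasisMap

variable {A : H →L[ℂ] H} {σ : ℤ → ℤ}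

theorem adjoint_apply_apply_of_apply_e (hA : ∀ n, A (e n) = e (σ n)) (g : H) (n : ℤ) :
    adjoint A g n = g (σ n) := by
  rw [← inner_e_left, adjoint_inner_right, hA, inner_e_left]

theorem adjoint_apply_e_of_apply_e (hA : ∀ n, A (e n) = e (σ n)) (hσ : σ.Injective) (n : ℤ) :
    adjoint A (e (σ n)) = e n :=
  lp.ext <| funext fun m => by
    simp only [adjoint_apply_apply_of_apply_e hA, e_apply, hσ.eq_iff]

theorem pow_apply_e_of_apply_e (hA : ∀ n, A (e n) = e (σ n)) (k : ℕ) (n : ℤ) :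
    (A ^ k) (e n) = e (σ^[k] n) := by
  induction k with
  | zero => rfl
  | succ k ih => rw [pow_succ', mul_apply_eq_comp, ih, hA, Function.iterate_succ_apply']

theorem adjoint_pow_apply_e_of_apply_e (hA : ∀ n, A (e n) = e (σ n)) (hσ : σ.Injective)
    (k : ℕ) (n : ℤ) : (adjoint A ^ k) (e (σ^[k] n)) = e n := by
  induction k with
  | zero => rfl
  | succ k ih =>
    rw [pow_succ, mul_apply_eq_comp, Function.iterate_succ_apply',
      adjoint_apply_e_of_apply_e hA hσ, ih]

theorem conj_apply_e_of_apply_e {B : H →L[ℂ] H} {τ : ℤ → ℤ} (hA : ∀ n, A (e n) = e (σ n))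
    (hσ : σ.Injective) (hB : ∀ n, B (e n) = e (τ n)) (hτ : τ.Injective) (k : ℕ) (n : ℤ) :
    (A ^ k * (B * adjoint B) * adjoint A ^ k) (e (σ^[k] (τ n))) = e (σ^[k] (τ n)) := by
  simp only [mul_apply_eq_comp, adjoint_pow_apply_e_of_apply_e hA hσ,
    adjoint_apply_e_of_apply_e hB hτ, hB, pow_apply_e_of_apply_e hA]

end BasisMap

theorem exists_eq_iterate_two_mul_add_one {n : ℤ} (hn : n ≠ -1) :
    ∃ k : ℕ, ∃ r : ℤ, n = (fun m => 2 * m + 1)^[k] (2 * r) := by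
  induction h : n.natAbs using Nat.strong_induction_on generalizing n with
  | _ a ih =>
  obtain ⟨m, rfl | rfl⟩ := Int.even_or_odd' n
  · exact ⟨0, m, rfl⟩
  · obtain ⟨k, r, rfl⟩ := ih m.natAbs (by omega) (by omega) rfl
    exact ⟨k + 1, r, by rw [Function.iterate_succ_apply']⟩

theorem S₂_apply_e {S₂ : H →L[ℂ] H}
    (hS₂ : ∀ (f : H) (n : ℤ), S₂ f n = if Even n then f (n / 2) else 0) (n : ℤ) :
    S₂ (e n) = e (2 * n) :=
  lp.ext <| funext fun m => by
    rw [hS₂, e_apply, e_apply]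
    by_cases hm : Even m
    · obtain ⟨c, rfl⟩ := hm
      rw [if_pos ⟨c, rfl⟩, show (c + c) / 2 = c by omega]
      exact if_congr (by omega) rfl rfl
    · rw [if_neg hm, if_neg (by rintro rfl; exact hm (even_two_mul n))]

/-- If a bounded operator `T` on `ℓ²(ℤ)` satisfies `T p_k = U p_k` for all `k` and
agrees with `U` on the one-dimensional subspace spanned by `e_{−1}`, then `T = U`. -/
theorem eq_U_of_agree_on_pk_and_e_neg_one
    (U S₂ : H →L[ℂ] H)
    (hU : ∀ n : ℤ, U (e n) = e (n + 1))
    (hS₂ : ∀ (f : H) (n : ℤ), S₂ f n = if Even n then f (n / 2) else 0)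
    (p : ℕ → H →L[ℂ] H)
    (hp : ∀ k : ℕ, p k = (U * S₂) ^ k * (S₂ * ContinuousLinearMap.adjoint S₂) *
      (ContinuousLinearMap.adjoint (U * S₂)) ^ k)
    (T : H →L[ℂ] H)
    (hTp : ∀ k : ℕ, T * p k = U * p k)
    (hTe : ∀ v ∈ Submodule.span ℂ ({e (-1)} : Set H), T v = U v) :
    T = U := by
  have hS₂e := S₂_apply_e hS₂
  have hUS₂e (n : ℤ) : (U * S₂) (e n) = e (2 * n + 1) := by rw [mul_apply_eq_comp, hS₂e, hU]
  refine ext_e fun n => ?_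
  by_cases hn : n = -1
  · exact hTe _ (hn ▸ Submodule.mem_span_singleton_self _)
  obtain ⟨k, r, rfl⟩ := exists_eq_iterate_two_mul_add_one hn
  have hfix : p k (e _) = e _ := hp k ▸ conj_apply_e_of_apply_e hUS₂e
    (fun _ _ h => by omega) hS₂e (fun _ _ h => by omega) k r
  calc T (e _) = (T * p k) (e _) := by rw [mul_apply_eq_comp, hfix]
    _ = (U * p k) (e _) := by rw [hTp]
    _ = U (e _) := by rw [mul_apply_eq_comp, hfix]

end
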